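/- arXiv:1608.06363 — 2 statements merged into one kernel-verified Lean document; each statement's English description precedes it below -/
import Mathlib

section
/- Let P, P̄ be symmetric with P ≥ 0 and P + P̄ ≥ 0, and Q ≥ 0, Q + Q̄ ≥ 0, R ≥ 0, R + R̄ ≥ 0. Define Υ⁽²⁾ = R + R̄ + (B+B̄)'(P+P̄)(B+B̄) + σ²(D+D̄)'P(D+D̄), M⁽²⁾ = (B+B̄)'(P+P̄)(A+Ā) + σ²(D+D̄)'P(C+C̄), and assume Υ⁽²⁾ is invertible. Then the updated sum S = Q + Q̄ + (A+Ā)'(P+P̄)(A+Ā) + σ²(C+C̄)'P(C+C̄) − [M⁽²⁾]'[Υ⁽²⁾]⁻¹M⁽²⁾ is positive semidefinite. -/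
/-!
The matrix `S` is the Schur complement of the invertible block `Υ⁽²⁾` in the Hessian
`[[Q̂ + Âᵀ P̂ Â + σ² Ĉᵀ P Ĉ, M⁽²⁾ᵀ], [M⁽²⁾, Υ⁽²⁾]]` of the quadratic cost
`(x, u) ↦ xᵀ Q̂ x + uᵀ R̂ u + (Âx + B̂u)ᵀ P̂ (Âx + B̂u) + σ² (Ĉx + D̂u)ᵀ P (Ĉx + D̂u)`
(hats denoting sums such as `Â = A + Ā`). This Hessian is a sum of Gram matrices
`Eᵀ W E` with `W ⪰ 0`, hence positive semidefinite, and a positive semidefinite block matrix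
whose lower-right block is invertible has a positive semidefinite Schur complement.
-/

open Matrix

namespace Matrix

variable {ι κ μ ν : Type*} [Fintype ι] [Fintype κ] [Fintype μ] [Fintype ν]

lemma PosSemidef.transpose_mul_mul_same {A : Matrix μ μ ℝ} (hA : A.PosSemidef)
    (B : Matrix μ ι ℝ) : (Bᵀ * A * B).PosSemidef := by
  simpa only [conjTranspose_eq_transpose_of_trivial] using hA.conjTranspose_mul_mul_same B

lemma PosSemidef.fromBlocks_zero_zero [DecidableEq ι] [DecidableEq κ] {A : Matrix ι ι ℝ}
    {D : Matrix κ κ ℝ} (hA : A.PosSemidef) (hD : D.PosSemidef) :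
    (fromBlocks A 0 0 D).PosSemidef := by
  convert (hA.transpose_mul_mul_same (fromCols 1 0 : Matrix ι (ι ⊕ κ) ℝ)).add
    (hD.transpose_mul_mul_same (fromCols 0 1 : Matrix κ (ι ⊕ κ) ℝ)) using 1
  ext (i | i) (j | j) <;> simp [transpose_fromCols, fromRows_mul]

lemma posSemidef_fromBlocks_quadraticCost [DecidableEq ι] [DecidableEq κ]
    {Q : Matrix ι ι ℝ} {R : Matrix κ κ ℝ} {P : Matrix μ μ ℝ} {P' : Matrix ν ν ℝ}
    (hQ : Q.PosSemidef) (hR : R.PosSemidef) (hP : P.PosSemidef) (hP' : P'.PosSemidef)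
    (A : Matrix μ ι ℝ) (B : Matrix μ κ ℝ) (C : Matrix ν ι ℝ) (D : Matrix ν κ ℝ)
    {c : ℝ} (hc : 0 ≤ c) :
    (fromBlocks (Q + Aᵀ * P * A + c • (Cᵀ * P' * C)) (Bᵀ * P * A + c • (Dᵀ * P' * C))ᵀ
      (Bᵀ * P * A + c • (Dᵀ * P' * C)) (R + Bᵀ * P * B + c • (Dᵀ * P' * D))).PosSemidef := by
  have hPsymm : Pᵀ = P := (isHermitian_iff_isSymm.mp hP.isHermitian).eq
  have hP'symm : P'ᵀ = P' := (isHermitian_iff_isSymm.mp hP'.isHermitian).eq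
  convert ((hQ.fromBlocks_zero_zero hR).add (hP.transpose_mul_mul_same (fromCols A B))).add
    ((hP'.transpose_mul_mul_same (fromCols C D)).smul hc) using 1
  simp only [transpose_fromCols, fromRows_mul, mul_fromCols, fromCols_fromRows_eq_fromBlocks,
    fromBlocks_add, fromBlocks_smul, zero_add, transpose_add, transpose_smul,
    transpose_mul, transpose_transpose, hPsymm, hP'symm, Matrix.mul_assoc]

lemma PosSemidef.sub_transpose_mul_inv_mul_of_fromBlocks [DecidableEq κ] {X : Matrix ι ι ℝ}
    {M : Matrix κ ι ℝ} {Y : Matrix κ κ ℝ} (h : (fromBlocks X Mᵀ M Y).PosSemidef)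
    (hY : IsUnit Y) : (X - Mᵀ * Y⁻¹ * M).PosSemidef := by
  have hYpsd : Y.PosSemidef := h.submatrix Sum.inr
  have hYpd : Y.PosDef := hYpsd.posDef_iff_isUnit.mpr hY
  have := hY.invertible
  simpa [conjTranspose_eq_transpose_of_trivial] using (PosDef.fromBlocks₂₂ X Mᵀ hYpd).mp
    (by simpa [conjTranspose_eq_transpose_of_trivial] using h)

end Matrix

theorem stmt6_general (n m : ℕ)
    (A Abar C Cbar : Matrix (Fin n) (Fin n) ℝ)
    (B Bbar D Dbar : Matrix (Fin n) (Fin m) ℝ) (σ : ℝ)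
    (P Pbar Q Qbar : Matrix (Fin n) (Fin n) ℝ)
    (R Rbar : Matrix (Fin m) (Fin m) ℝ)
    (hP : P.PosSemidef) (hPP : (P + Pbar).PosSemidef)
    (hQQ : (Q + Qbar).PosSemidef) (hRR : (R + Rbar).PosSemidef)
    (Υ2 : Matrix (Fin m) (Fin m) ℝ)
    (hΥ2 : Υ2 = R + Rbar + (B + Bbar)ᵀ * (P + Pbar) * (B + Bbar)
        + σ ^ 2 • ((D + Dbar)ᵀ * P * (D + Dbar)))
    (hU : IsUnit Υ2)
    (M2 : Matrix (Fin m) (Fin n) ℝ)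
    (hM2 : M2 = (B + Bbar)ᵀ * (P + Pbar) * (A + Abar)
        + σ ^ 2 • ((D + Dbar)ᵀ * P * (C + Cbar)))
    (S : Matrix (Fin n) (Fin n) ℝ)
    (hS : S = Q + Qbar + (A + Abar)ᵀ * (P + Pbar) * (A + Abar)
        + σ ^ 2 • ((C + Cbar)ᵀ * P * (C + Cbar)) - M2ᵀ * Υ2⁻¹ * M2) :
    S.PosSemidef := by
  subst hS hΥ2 hM2
  exact (posSemidef_fromBlocks_quadraticCost hQQ hRR hPP hP (A + Abar) (B + Bbar) (C + Cbar)
    (D + Dbar) (sq_nonneg σ)).sub_transpose_mul_inv_mul_of_fromBlocks hU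

/-- The mean-field Riccati update for the sum P + P̄ preserves
positive semidefiniteness. -/
theorem stmt6 (n m : ℕ)
    (A Abar C Cbar : Matrix (Fin n) (Fin n) ℝ)
    (B Bbar D Dbar : Matrix (Fin n) (Fin m) ℝ) (σ : ℝ)
    (P Pbar Q Qbar : Matrix (Fin n) (Fin n) ℝ)
    (R Rbar : Matrix (Fin m) (Fin m) ℝ)
    (hP : P.PosSemidef) (hPbar : Pbar.IsSymm) (hPP : (P + Pbar).PosSemidef)
    (hQ : Q.PosSemidef) (hQbar : Qbar.IsSymm) (hQQ : (Q + Qbar).PosSemidef)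
    (hR : R.PosSemidef) (hRbar : Rbar.IsSymm) (hRR : (R + Rbar).PosSemidef)
    (Υ2 : Matrix (Fin m) (Fin m) ℝ)
    (hΥ2 : Υ2 = R + Rbar + (B + Bbar)ᵀ * (P + Pbar) * (B + Bbar)
        + σ ^ 2 • ((D + Dbar)ᵀ * P * (D + Dbar)))
    (hU : IsUnit Υ2)
    (M2 : Matrix (Fin m) (Fin n) ℝ)
    (hM2 : M2 = (B + Bbar)ᵀ * (P + Pbar) * (A + Abar)
        + σ ^ 2 • ((D + Dbar)ᵀ * P * (C + Cbar)))
    (S : Matrix (Fin n) (Fin n) ℝ)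
    (hS : S = Q + Qbar + (A + Abar)ᵀ * (P + Pbar) * (A + Abar)
        + σ ^ 2 • ((C + Cbar)ᵀ * P * (C + Cbar)) - M2ᵀ * Υ2⁻¹ * M2) :
    S.PosSemidef :=
  stmt6_general n m A Abar C Cbar B Bbar D Dbar σ P Pbar Q Qbar R Rbar hP hPP hQQ hRR Υ2 hΥ2 hU M2
    hM2 S hS
end

section
/- Block upper-triangular structure from a semidefinite Lyapunov solution: let 𝒬 ≥ 0, P ≥ 0 be symmetric matrices satisfying P = 𝒬 + A'PA + σ²C₁'PC₁ + σ²C₂'PC₂, and suppose P is block-diagonalized as U'PU = diag(0, P₂) with P₂ > 0 for an orthogonal U. Writing U'AU, U'C₁U, U'C₂U, U'𝒬U in corresponding 2×2 block form, the lower-left blocks of U'AU, U'C₁U, U'C₂U all vanish, and U'𝒬U = diag(0, 𝒬₂) for some 𝒬₂ ≥ 0. -/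
/-!
Pass to the coordinates given by `U`: there `P` becomes `diag(0, P₂)`, and the Lyapunov equation
keeps its form because `U` is orthogonal. For `x` in the first block `xᵀ P x = 0`, so evaluating
the equation at `x` writes `0` as a sum of the nonnegative quadratic forms `xᵀ Q x`,
`(A x)ᵀ P (A x)` and `σ² (Cᵢ x)ᵀ P (Cᵢ x)`. Each of them vanishes, and a semidefinite form
vanishes exactly on the kernel of its matrix: `Q x = 0` and `P A x = P Cᵢ x = 0`. As `P₂` is
definite, the latter say that `A x` and `Cᵢ x` have no component in the second block, while
`Q x = 0` and the symmetry of `Q` leave only the lower-right block of `Q`.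
-/

open Matrix

namespace Matrix

section Lyapunov

variable {m ι : Type*} [Fintype m] [Fintype ι]

lemma transpose_conj_mul_conj_mul_conj [DecidableEq m] {U : Matrix m m ℝ} (hU : U * Uᵀ = 1)
    (M P : Matrix m m ℝ) :
    (Uᵀ * M * U)ᵀ * (Uᵀ * P * U) * (Uᵀ * M * U) = Uᵀ * (Mᵀ * P * M) * U := by
  simp only [transpose_mul, transpose_transpose, Matrix.mul_assoc]
  rw [← Matrix.mul_assoc U Uᵀ, hU, Matrix.one_mul, ← Matrix.mul_assoc U Uᵀ, hU, Matrix.one_mul]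

lemma conj_eq_add_sum_of_eq_add_sum [DecidableEq m] {U P Q : Matrix m m ℝ} {M : ι → Matrix m m ℝ}
    {c : ι → ℝ} (hU : U * Uᵀ = 1) (h : P = Q + ∑ i, c i • ((M i)ᵀ * P * M i)) :
    Uᵀ * P * U = Uᵀ * Q * U +
      ∑ i, c i • ((Uᵀ * M i * U)ᵀ * (Uᵀ * P * U) * (Uᵀ * M i * U)) := by
  simp only [transpose_conj_mul_conj_mul_conj hU]
  conv_lhs => rw [h]
  simp only [Matrix.mul_add, Matrix.add_mul, Matrix.mul_sum, Matrix.sum_mul, Matrix.mul_smul,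
    Matrix.smul_mul]

lemma PosSemidef.transpose_mul_mul_same_s12 {Q : Matrix m m ℝ} (hQ : Q.PosSemidef)
    (U : Matrix m m ℝ) : (Uᵀ * Q * U).PosSemidef := by
  simpa only [conjTranspose_eq_transpose_of_trivial] using hQ.conjTranspose_mul_mul_same U

lemma mulVec_eq_zero_of_eq_add_sum {P Q : Matrix m m ℝ} {M : ι → Matrix m m ℝ} {c : ι → ℝ}
    (hP : P.PosSemidef) (hQ : Q.PosSemidef) (hc : ∀ i, 0 < c i)
    (h : P = Q + ∑ i, c i • ((M i)ᵀ * P * M i)) {x : m → ℝ} (hx : P *ᵥ x = 0) :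
    Q *ᵥ x = 0 ∧ ∀ i, P *ᵥ (M i *ᵥ x) = 0 := by
  have hform : x ⬝ᵥ Q *ᵥ x + ∑ i, c i * ((M i *ᵥ x) ⬝ᵥ P *ᵥ (M i *ᵥ x)) = 0 := by
    rw [← dotProduct_zero x, ← hx]
    conv_rhs => rw [h]
    simp only [add_mulVec, dotProduct_add, sum_mulVec, dotProduct_sum, smul_mulVec,
      dotProduct_smul, smul_eq_mul, ← mulVec_mulVec, dotProduct_mulVec x, vecMul_transpose]
  have hQx : 0 ≤ x ⬝ᵥ Q *ᵥ x := by simpa using hQ.dotProduct_mulVec_nonneg x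
  have hPMx : ∀ i, 0 ≤ c i * ((M i *ᵥ x) ⬝ᵥ P *ᵥ (M i *ᵥ x)) := fun i =>
    mul_nonneg (hc i).le (by simpa using hP.dotProduct_mulVec_nonneg (M i *ᵥ x))
  obtain ⟨hQ0, hsum0⟩ :=
    (add_eq_zero_iff_of_nonneg hQx (Finset.sum_nonneg fun i _ => hPMx i)).mp hform
  refine ⟨(hQ.dotProduct_mulVec_zero_iff x).mp (by simpa using hQ0), fun i => ?_⟩
  have hi := (Finset.sum_eq_zero_iff_of_nonneg fun i _ => hPMx i).mp hsum0 i (Finset.mem_univ i)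
  exact (hP.dotProduct_mulVec_zero_iff _).mp
    (by simpa using (mul_eq_zero.mp hi).resolve_left (hc i).ne')

end Lyapunov

section Blocks

variable {m n : Type*} [Fintype m] [Fintype n] [DecidableEq m] [DecidableEq n]

lemma fromBlocks_zero_zero_zero_mulVec_single_inl (D : Matrix n n ℝ) (j : m) :
    (fromBlocks 0 0 0 D : Matrix (m ⊕ n) (m ⊕ n) ℝ) *ᵥ Pi.single (Sum.inl j) 1 = 0 := by
  ext (i | i) <;> simp

lemma toBlocks₂₁_eq_zero_of_fromBlocks_mulVec {D : Matrix n n ℝ} (hD : D.PosDef)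
    {M : Matrix (m ⊕ n) (m ⊕ n) ℝ}
    (h : ∀ j, (fromBlocks 0 0 0 D : Matrix (m ⊕ n) (m ⊕ n) ℝ) *ᵥ
      (M *ᵥ Pi.single (Sum.inl j) 1) = 0) :
    M.toBlocks₂₁ = 0 := by
  ext i j
  have hcol : D *ᵥ (fun k => M.toBlocks₂₁ k j) = 0 := by
    ext k
    simpa [mulVec, dotProduct, Fintype.sum_sum_type, toBlocks₂₁, Pi.single_apply]
      using congrFun (h j) (Sum.inr k)
  exact congrFun ((mulVec_injective_iff_isUnit.mpr hD.isUnit).eq_iff.mp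
    (hcol.trans (mulVec_zero D).symm)) i

lemma PosSemidef.exists_eq_fromBlocks_zero {Q : Matrix (m ⊕ n) (m ⊕ n) ℝ} (hQ : Q.PosSemidef)
    (h : ∀ j, Q *ᵥ Pi.single (Sum.inl j) 1 = 0) :
    ∃ Q₂ : Matrix n n ℝ, Q₂.PosSemidef ∧ Q = fromBlocks 0 0 0 Q₂ := by
  have hcol : ∀ i j, Q i (Sum.inl j) = 0 := fun i j => by
    simpa [mulVec_single] using congrFun (h j) i
  have hrow : ∀ i j, Q (Sum.inl j) i = 0 := fun i j => by
    simpa [hcol] using (hQ.1.apply (Sum.inl j) i).symm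
  refine ⟨Q.toBlocks₂₂, hQ.submatrix Sum.inr, ?_⟩
  ext (i | i) (j | j) <;> simp [hrow, hcol, toBlocks₂₂]

end Blocks

end Matrix

/-- Block upper-triangular structure of the closed-loop matrices
arising from a semidefinite Lyapunov solution block-diagonalized as diag(0, P₂). -/
theorem stmt12 (n1 n2 : ℕ)
    (A C1 C2 Q P U : Matrix (Fin n1 ⊕ Fin n2) (Fin n1 ⊕ Fin n2) ℝ)
    (σ : ℝ) (hσ : σ ≠ 0)
    (hQ : Q.PosSemidef) (hP : P.PosSemidef)
    (hU : Uᵀ * U = 1)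
    (P2 : Matrix (Fin n2) (Fin n2) ℝ) (hP2 : P2.PosDef)
    (hPblock : Uᵀ * P * U = Matrix.fromBlocks 0 0 0 P2)
    (hLyap : P = Q + Aᵀ * P * A + σ ^ 2 • (C1ᵀ * P * C1) + σ ^ 2 • (C2ᵀ * P * C2)) :
    (Uᵀ * A * U).toBlocks₂₁ = 0 ∧
    (Uᵀ * C1 * U).toBlocks₂₁ = 0 ∧
    (Uᵀ * C2 * U).toBlocks₂₁ = 0 ∧
    ∃ Q2 : Matrix (Fin n2) (Fin n2) ℝ, Q2.PosSemidef ∧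
      Uᵀ * Q * U = Matrix.fromBlocks 0 0 0 Q2 := by
  set M : Fin 3 → Matrix (Fin n1 ⊕ Fin n2) (Fin n1 ⊕ Fin n2) ℝ := ![A, C1, C2]
  set c : Fin 3 → ℝ := ![1, σ ^ 2, σ ^ 2]
  have hc : ∀ i, 0 < c i := by
    intro i
    fin_cases i <;> simp [c, hσ, sq_pos_of_ne_zero]
  have hLyapSum : P = Q + ∑ i, c i • ((M i)ᵀ * P * M i) := by
    simpa [M, c, Fin.sum_univ_three, add_assoc] using hLyap
  have hConj := conj_eq_add_sum_of_eq_add_sum (mul_eq_one_comm.mp hU) hLyapSum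
  have hKer : ∀ j : Fin n1, (Uᵀ * Q * U) *ᵥ Pi.single (Sum.inl j) 1 = 0 ∧
      ∀ i, (Uᵀ * P * U) *ᵥ ((Uᵀ * M i * U) *ᵥ Pi.single (Sum.inl j) 1) = 0 := fun j =>
    mulVec_eq_zero_of_eq_add_sum (hP.transpose_mul_mul_same_s12 U) (hQ.transpose_mul_mul_same_s12 U) hc
      hConj (by rw [hPblock]; exact fromBlocks_zero_zero_zero_mulVec_single_inl P2 j)
  have hLowerLeft : ∀ i, (Uᵀ * M i * U).toBlocks₂₁ = 0 := fun i =>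
    toBlocks₂₁_eq_zero_of_fromBlocks_mulVec hP2 fun j => hPblock ▸ (hKer j).2 i
  exact ⟨hLowerLeft 0, hLowerLeft 1, hLowerLeft 2,
    (hQ.transpose_mul_mul_same_s12 U).exists_eq_fromBlocks_zero fun j => (hKer j).1⟩
end
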